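/- For every integer n ≥ 1, one has λ₀(n) > 1. -/

import Mathlib

open Real Filter

noncomputable def b (n : ℕ) (j : ℕ) : ℝ :=
  ∏ ℓ ∈ Finset.Icc 1 j, 1 / (2 * (ℓ : ℝ) * ((n : ℝ) + 2 * ((ℓ : ℝ) - 1)))

noncomputable def phi0 (n : ℕ) (ρ : ℝ) : ℝ := ∑' j : ℕ, b n j * ρ ^ (2 * j)

/-!
Differentiating termwise (legitimate since `bⱼ ≤ 1/j!`) gives
`F(λ) = λ φ₀'(λ) - φ₀(λ) = ∑ⱼ (2j - 1) bⱼ λ^{2j}`. Its constant term is `-1`, and the ratio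
`(2j + 3) b_{j+2} / ((2j + 1) b_{j+1})` is at most `1/4`, while `b₁ = 1/(2n) ≤ 1/2`. Hence for
`0 < λ ≤ 1` the remaining terms add up to at most `(1/2) ∑ (1/4)ʲ = 2/3 < 1`, so `F(λ) < 0`.
-/

section EvenPowerSeries

variable {c : ℕ → ℝ} {R y : ℝ}

lemma norm_mul_two_mul_pow_le (hy : |y| ≤ R) (j : ℕ) :
    ‖c j * (2 * j) * y ^ (2 * j - 1)‖ ≤ |c j| * (2 * j) * R ^ (2 * j - 1) := by
  rw [norm_mul, norm_mul, Real.norm_eq_abs, norm_pow, Real.norm_eq_abs, Real.norm_eq_abs,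
    abs_of_nonneg (by positivity : (0 : ℝ) ≤ 2 * j)]
  gcongr

lemma hasDerivAt_tsum_mul_pow_two_mul
    (hc : Summable fun j => |c j| * (2 * j) * R ^ (2 * j - 1)) (hy : |y| < R) :
    HasDerivAt (fun x => ∑' j, c j * x ^ (2 * j)) (∑' j, c j * (2 * j) * y ^ (2 * j - 1)) y := by
  have hR : 0 < R := (abs_nonneg y).trans_lt hy
  refine hasDerivAt_tsum_of_isPreconnected hc isOpen_Ioo isPreconnected_Ioo
    (fun j x _ => ?_) (fun j x hx => norm_mul_two_mul_pow_le (abs_lt.2 hx).le j)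
    (y₀ := 0) (by simpa using hR) ?_ (abs_lt.1 hy)
  · simpa [mul_assoc] using (hasDerivAt_pow (2 * j) x).const_mul (c j)
  · refine summable_of_ne_finset_zero (s := {0}) fun j hj => ?_
    simp [zero_pow (by simpa using hj : 2 * j ≠ 0)]

end EvenPowerSeries

open Nat

lemma b_zero (n : ℕ) : b n 0 = 1 := by simp [b]

lemma b_succ (n j : ℕ) : b n (j + 1) = b n j / (2 * (j + 1) * (n + 2 * j)) := by
  rw [b, b, Finset.prod_Icc_succ_top (Nat.le_add_left 1 j)]
  push_cast
  ring

lemma b_pos {n : ℕ} (hn : 1 ≤ n) (j : ℕ) : 0 < b n j := by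
  have hn' : (1 : ℝ) ≤ n := by exact_mod_cast hn
  induction j with
  | zero => simp [b_zero]
  | succ j ih => rw [b_succ]; positivity

lemma b_le_inv_factorial {n : ℕ} (hn : 1 ≤ n) (j : ℕ) : b n j ≤ 1 / j ! := by
  have hn' : (1 : ℝ) ≤ n := by exact_mod_cast hn
  induction j with
  | zero => simp [b_zero]
  | succ j ih =>
    calc b n (j + 1) ≤ b n j / (j + 1) := by
          rw [b_succ]
          gcongr
          · exact (b_pos hn j).le
          · nlinarith [(j.cast_nonneg : (0 : ℝ) ≤ j)]
      _ ≤ 1 / j ! / (j + 1) := by gcongr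
      _ = 1 / (j + 1)! := by rw [Nat.factorial_succ]; push_cast; field_simp

lemma b_two_mul_add_three_le {n : ℕ} (hn : 1 ≤ n) (j : ℕ) :
    (2 * j + 3) * b n (j + 2) ≤ (2 * j + 1) * b n (j + 1) / 4 := by
  have hn' : (1 : ℝ) ≤ n := by exact_mod_cast hn
  have hj : (0 : ℝ) ≤ j := j.cast_nonneg
  rw [b_succ n (j + 1), mul_div_assoc', div_le_div_iff₀ (by positivity) (by norm_num)]
  push_cast
  have hb := b_pos hn (j + 1)
  nlinarith [mul_nonneg hb.le hj, mul_nonneg (mul_nonneg hb.le hj) hj,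
    mul_nonneg hb.le (sub_nonneg.2 hn'), mul_nonneg (mul_nonneg hb.le hj) (sub_nonneg.2 hn')]

lemma two_mul_add_one_mul_b_succ_le {n : ℕ} (hn : 1 ≤ n) (j : ℕ) :
    (2 * j + 1) * b n (j + 1) ≤ (1 / 2) * (1 / 4) ^ j := by
  induction j with
  | zero =>
    have hn' : (1 : ℝ) ≤ n := by exact_mod_cast hn
    norm_num [b_succ, b_zero]
    exact inv_le_one_of_one_le₀ hn'
  | succ j ih =>
    calc (2 * ((j + 1 : ℕ) : ℝ) + 1) * b n (j + 1 + 1) = (2 * j + 3) * b n (j + 2) := by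
          push_cast; ring_nf
      _ ≤ (2 * j + 1) * b n (j + 1) / 4 := b_two_mul_add_three_le hn j
      _ ≤ (1 / 2) * (1 / 4) ^ j / 4 := by gcongr
      _ = (1 / 2) * (1 / 4) ^ (j + 1) := by ring

lemma summable_b_mul_pow {n : ℕ} (hn : 1 ≤ n) (y : ℝ) : Summable fun j => b n j * y ^ (2 * j) := by
  refine (Real.summable_pow_div_factorial (y ^ 2)).of_nonneg_of_le
    (fun j => mul_nonneg (b_pos hn j).le ((even_two_mul j).pow_nonneg y)) fun j => ?_
  calc b n j * y ^ (2 * j) ≤ 1 / j ! * (y ^ 2) ^ j := by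
        rw [pow_mul]; gcongr; exact b_le_inv_factorial hn j
    _ = (y ^ 2) ^ j / j ! := by ring

lemma summable_abs_b_mul_two_mul_two_pow {n : ℕ} (hn : 1 ≤ n) :
    Summable fun j => |b n j| * (2 * j) * 2 ^ (2 * j - 1) := by
  refine .of_nonneg_of_le (fun j => by positivity) (fun j => ?_)
    ((Real.summable_pow_div_factorial 8).mul_left 2)
  have h2j : (2 * j : ℝ) ≤ 2 * 2 ^ j := by
    gcongr; exact_mod_cast j.lt_two_pow_self.le
  have h4j : (2 : ℝ) ^ (2 * j - 1) ≤ 4 ^ j :=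
    calc (2 : ℝ) ^ (2 * j - 1) ≤ 2 ^ (2 * j) := pow_le_pow_right₀ (by norm_num) (Nat.sub_le _ _)
      _ = 4 ^ j := by rw [pow_mul]; norm_num
  calc |b n j| * (2 * j) * 2 ^ (2 * j - 1) ≤ 1 / j ! * (2 * 2 ^ j) * 4 ^ j := by
        rw [abs_of_pos (b_pos hn j)]
        gcongr
        exact b_le_inv_factorial hn j
    _ = 2 * (8 ^ j / j !) := by
        rw [show (8 : ℝ) = 2 * 4 by norm_num, mul_pow]; ring

lemma hasSum_mul_deriv_phi0_sub_phi0 {n : ℕ} (hn : 1 ≤ n) {y : ℝ} (hy : |y| < 2) :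
    HasSum (fun j : ℕ => (2 * j - 1) * b n j * y ^ (2 * j)) (y * deriv (phi0 n) y - phi0 n y) := by
  have hc := summable_abs_b_mul_two_mul_two_pow hn
  have hderiv : HasDerivAt (phi0 n) (∑' j, b n j * (2 * j) * y ^ (2 * j - 1)) y :=
    hasDerivAt_tsum_mul_pow_two_mul hc hy
  have hsummable : Summable fun j => b n j * (2 * j) * y ^ (2 * j - 1) :=
    hc.of_norm_bounded (norm_mul_two_mul_pow_le hy.le)
  rw [hderiv.deriv]
  refine ((hsummable.hasSum.mul_left y).sub (summable_b_mul_pow hn y).hasSum).congr_fun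
    fun j => ?_
  rcases j with _ | j
  · simp
  · rw [show 2 * (j + 1) - 1 = 2 * j + 1 by omega, show 2 * (j + 1) = 2 * j + 1 + 1 by omega,
      pow_succ _ (2 * j + 1)]
    push_cast
    ring

/-- `λ₀(n) > 1`: any positive root of `λ φ₀'(λ) = φ₀(λ)` exceeds `1`. -/
theorem stmt5 (n : ℕ) (hn : 1 ≤ n) (l : ℝ) (hl : 0 < l)
    (heq : l * deriv (phi0 n) l = phi0 n l) :
    1 < l := by
  by_contra! hle
  have hsum := hasSum_mul_deriv_phi0_sub_phi0 hn (y := l) (by rw [abs_of_pos hl]; linarith)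
  rw [heq, sub_self, ← hasSum_nat_add_iff' 1] at hsum
  have htail : ∀ j : ℕ, (2 * ((j + 1 : ℕ) : ℝ) - 1) * b n (j + 1) * l ^ (2 * (j + 1))
      ≤ (1 / 2) * (1 / 4) ^ j := fun j =>
    calc _ = (2 * j + 1) * b n (j + 1) * l ^ (2 * (j + 1)) := by push_cast; ring
      _ ≤ (2 * j + 1) * b n (j + 1) := by
          have := b_pos hn (j + 1)
          exact mul_le_of_le_one_right (by positivity) (pow_le_one₀ hl.le hle)
      _ ≤ (1 / 2) * (1 / 4) ^ j := two_mul_add_one_mul_b_succ_le hn j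
  -- the tail sums to `0 - (-1) = 1`, but is at most `(1/2) · (4/3) = 2/3`
  have := hasSum_le htail hsum
    ((hasSum_geometric_of_lt_one (by norm_num) (by norm_num)).mul_left (1 / 2))
  norm_num [b_zero] at this
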